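/- Let g : [0,T] → [0,∞) be measurable and bounded, λ > 0, and β ∈ (0,2). Then sup_{t∈[0,T]} e^{−λt} ∫₀ᵗ (t−r)^{−2+β/2} ∫ᵣᵗ g(u) du dr ≤ C(β)·λ^{−β/2}·sup_{u∈[0,T]} e^{−λu} g(u), where C(β) = ∫₀^∞ (1−e^{−s}) s^{−2+β/2} ds < ∞. -/
import Mathlib


open MeasureTheory Real

theorem exp_weighted_sup_double_integral_bound
    (T : ℝ) (hT : 0 < T) (g : ℝ → ℝ) (hg : Measurable g)
    (hg0 : ∀ t, 0 ≤ g t) (M : ℝ) (hgM : ∀ t, g t ≤ M)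
    (lam β : ℝ) (hlam : 0 < lam) (hβ : β ∈ Set.Ioo (0:ℝ) 2) :
    IntegrableOn (fun s => (1 - Real.exp (-s)) * s ^ (-2 + β / 2)) (Set.Ioi (0:ℝ)) ∧
    ∀ t ∈ Set.Icc (0:ℝ) T,
      Real.exp (-lam * t) * ∫ r in (0:ℝ)..t, (t - r) ^ (-2 + β / 2) * ∫ u in r..t, g u ≤
        (∫ s in Set.Ioi (0:ℝ), (1 - Real.exp (-s)) * s ^ (-2 + β / 2)) * lam ^ (-β / 2) *
          ⨆ u : Set.Icc (0:ℝ) T, Real.exp (-lam * (u : ℝ)) * g u := by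
  obtain ⟨hβ0, hβ2⟩ := hβ
  set p : ℝ := -2 + β / 2 with hp
  have hp2 : (-2:ℝ) < p := by rw [hp]; linarith
  have hp1 : p < -1 := by rw [hp]; linarith
  have hp0 : p ≠ 0 := by rw [hp]; intro h; linarith
  have hp10 : p + 1 ≠ 0 := by rw [hp]; intro h; linarith
  set f : ℝ → ℝ := fun s => (1 - Real.exp (-s)) * s ^ p with hf
  have hfmeas : Measurable f :=
    (measurable_const.sub (measurable_id.neg.exp)).mul (measurable_id.pow_const p)
  have hfnonneg : ∀ s : ℝ, 0 ≤ s → 0 ≤ f s := by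
    intro s hs
    have h1 : Real.exp (-s) ≤ 1 := by
      have := Real.exp_le_exp.2 (show -s ≤ 0 by linarith)
      rwa [Real.exp_zero] at this
    exact mul_nonneg (by linarith) (Real.rpow_nonneg hs p)
  have homle : ∀ x : ℝ, 1 - Real.exp (-x) ≤ x := by
    intro x
    have := Real.add_one_le_exp (-x)
    linarith
  have hvp : ∀ v : ℝ, 0 ≤ v → v ^ p * v = v ^ (p + 1) := by
    intro v hv
    rcases eq_or_lt_of_le hv with h | h
    · rw [← h, Real.zero_rpow hp0, Real.zero_rpow hp10, zero_mul]
    · rw [Real.rpow_add_one h.ne' p]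
  -- Part 1 : integrability
  have hInt : IntegrableOn f (Set.Ioi (0:ℝ)) := by
    rw [← Set.Ioc_union_Ioi_eq_Ioi (zero_le_one : (0:ℝ) ≤ 1)]
    refine IntegrableOn.union ?_ ?_
    · refine Integrable.mono' ((intervalIntegral.intervalIntegrable_rpow' (by linarith : (-1:ℝ) < p + 1)
        (a := 0) (b := 1)).1) hfmeas.aestronglyMeasurable.restrict ?_
      filter_upwards [ae_restrict_mem measurableSet_Ioc] with s hs
      have hs0 : 0 < s := hs.1
      rw [Real.norm_eq_abs, abs_of_nonneg (hfnonneg s hs0.le)]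
      have h2 : (0:ℝ) ≤ s ^ p := Real.rpow_nonneg hs0.le p
      calc (1 - Real.exp (-s)) * s ^ p ≤ s * s ^ p :=
            mul_le_mul_of_nonneg_right (homle s) h2
        _ = s ^ (p + 1) := by rw [mul_comm]; exact hvp s hs0.le
    · refine Integrable.mono' (integrableOn_Ioi_rpow_of_lt hp1 one_pos)
        hfmeas.aestronglyMeasurable.restrict ?_
      filter_upwards [ae_restrict_mem measurableSet_Ioi] with s hs
      have hs0 : (0:ℝ) < s := lt_trans one_pos hs
      rw [Real.norm_eq_abs, abs_of_nonneg (hfnonneg s hs0.le)]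
      have h2 : (0:ℝ) ≤ s ^ p := Real.rpow_nonneg hs0.le p
      have h1 : 1 - Real.exp (-s) ≤ 1 := by
        have := Real.exp_pos (-s); linarith
      calc (1 - Real.exp (-s)) * s ^ p ≤ 1 * s ^ p := mul_le_mul_of_nonneg_right h1 h2
        _ = s ^ p := one_mul _
  refine ⟨hInt, ?_⟩
  set C : ℝ := ∫ s in Set.Ioi (0:ℝ), f s with hC
  set K : ℝ := ⨆ u : Set.Icc (0:ℝ) T, Real.exp (-lam * (u : ℝ)) * g u with hK
  have hMM : ∀ u : ℝ, 0 ≤ u → Real.exp (-lam * u) * g u ≤ max M 0 := by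
    intro u hu
    have h1 : Real.exp (-lam * u) ≤ 1 := by
      have : -lam * u ≤ 0 := by nlinarith
      have := Real.exp_le_exp.2 this
      rwa [Real.exp_zero] at this
    calc Real.exp (-lam * u) * g u ≤ 1 * g u :=
          mul_le_mul_of_nonneg_right h1 (hg0 u)
      _ = g u := one_mul _
      _ ≤ max M 0 := le_trans (hgM u) (le_max_left _ _)
  have hne : Nonempty (Set.Icc (0:ℝ) T) := ⟨⟨0, le_refl 0, hT.le⟩⟩
  have hbdd : BddAbove (Set.range fun u : Set.Icc (0:ℝ) T =>
      Real.exp (-lam * (u : ℝ)) * g u) := by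
    refine ⟨max M 0, ?_⟩
    rintro x ⟨u, rfl⟩
    exact hMM u u.2.1
  have hle_K : ∀ u : ℝ, (hu : u ∈ Set.Icc (0:ℝ) T) → Real.exp (-lam * u) * g u ≤ K :=
    fun u hu => le_ciSup hbdd ⟨u, hu⟩
  have hK0 : 0 ≤ K := by
    have := hle_K 0 ⟨le_refl 0, hT.le⟩
    simp only [mul_zero, Real.exp_zero, one_mul] at this
    exact le_trans (hg0 0) this
  have hgK : ∀ u ∈ Set.Icc (0:ℝ) T, g u ≤ Real.exp (lam * u) * K := by
    intro u hu
    have h := mul_le_mul_of_nonneg_left (hle_K u hu) (Real.exp_pos (lam * u)).le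
    rw [← mul_assoc, ← Real.exp_add,
      show lam * u + -lam * u = 0 from by ring, Real.exp_zero, one_mul] at h
    exact h
  have hgInt : ∀ a b : ℝ, IntervalIntegrable g volume a b := by
    intro a b
    constructor <;>
    · refine Measure.integrableOn_of_bounded (M := max M 0) measure_Ioc_lt_top.ne
        hg.aestronglyMeasurable ?_
      refine ae_of_all _ fun x => ?_
      rw [Real.norm_eq_abs, abs_of_nonneg (hg0 x)]
      exact le_trans (hgM x) (le_max_left _ _)
  -- Part 2
  intro t ht
  obtain ⟨ht0, htT⟩ := ht
  set F : ℝ → ℝ := fun r => ∫ u in r..t, g u with hFdef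
  have hFcont : Continuous F := by
    have h : Continuous fun r : ℝ => ∫ u in t..r, g u :=
      intervalIntegral.continuous_primitive hgInt t
    have he : F = fun r => -∫ u in t..r, g u := by
      funext r
      rw [hFdef]
      exact intervalIntegral.integral_symm t r
    rw [he]
    exact h.neg
  have hF0 : ∀ r, r ≤ t → 0 ≤ F r := fun r hr =>
    intervalIntegral.integral_nonneg hr fun u _ => hg0 u
  have hFleM : ∀ r ∈ Set.Icc (0:ℝ) t, F r ≤ max M 0 * (t - r) := by
    intro r hr
    calc F r ≤ ∫ _ in r..t, max M 0 := by
          refine intervalIntegral.integral_mono_on hr.2 (hgInt r t)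
            intervalIntegrable_const fun u _ => le_trans (hgM u) (le_max_left _ _)
      _ = max M 0 * (t - r) := by
          rw [intervalIntegral.integral_const, smul_eq_mul, mul_comm]
  have hFle : ∀ r ∈ Set.Icc (0:ℝ) t, F r ≤
      lam⁻¹ * (Real.exp (lam * t) - Real.exp (lam * r)) * K := by
    intro r hr
    have h1 : F r ≤ ∫ u in r..t, Real.exp (lam * u) * K := by
      refine intervalIntegral.integral_mono_on hr.2 (hgInt r t)
        (((Real.continuous_exp.comp (continuous_const.mul continuous_id)).mul
          continuous_const).intervalIntegrable r t) fun u hu => ?_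
      exact hgK u ⟨le_trans hr.1 hu.1, le_trans hu.2 htT⟩
    have h2 : (∫ u in r..t, Real.exp (lam * u) * K) =
        lam⁻¹ * (Real.exp (lam * t) - Real.exp (lam * r)) * K := by
      rw [intervalIntegral.integral_mul_const,
        intervalIntegral.integral_comp_mul_left Real.exp hlam.ne', integral_exp,
        smul_eq_mul]
    linarith [h1, h2.le]
  -- pointwise bound for the outer integrand
  have key : ∀ r ∈ Set.Icc (0:ℝ) t,
      Real.exp (-lam * t) * ((t - r) ^ p * F r) ≤
        K / lam * ((1 - Real.exp (-(lam * (t - r)))) * (t - r) ^ p) := by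
    intro r hr
    have hv0 : (0:ℝ) ≤ t - r := by linarith [hr.2]
    have hrp : (0:ℝ) ≤ (t - r) ^ p := Real.rpow_nonneg hv0 p
    have h1 := hFle r hr
    have e1 : Real.exp (-lam * t) * Real.exp (lam * t) = 1 := by
      rw [← Real.exp_add, show -lam * t + lam * t = 0 from by ring, Real.exp_zero]
    have e2 : Real.exp (-lam * t) * Real.exp (lam * r) = Real.exp (-(lam * (t - r))) := by
      rw [← Real.exp_add, show -lam * t + lam * r = -(lam * (t - r)) from by ring]
    calc Real.exp (-lam * t) * ((t - r) ^ p * F r)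
        ≤ Real.exp (-lam * t) * ((t - r) ^ p *
            (lam⁻¹ * (Real.exp (lam * t) - Real.exp (lam * r)) * K)) := by
          refine mul_le_mul_of_nonneg_left (mul_le_mul_of_nonneg_left h1 hrp)
            (Real.exp_pos _).le
      _ = K / lam * ((1 - Real.exp (-(lam * (t - r)))) * (t - r) ^ p) := by
          rw [div_eq_mul_inv]
          linear_combination ((t - r) ^ p * lam⁻¹ * K) * e1 -
            ((t - r) ^ p * lam⁻¹ * K) * e2
  -- integrability of both integrands on [0, t]
  have hrpow : IntervalIntegrable (fun r : ℝ => (t - r) ^ (p + 1)) volume 0 t := by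
    have h := (intervalIntegral.intervalIntegrable_rpow' (by linarith : (-1:ℝ) < p + 1)
      (a := t) (b := 0)).comp_sub_left t
    simpa using h
  have hI1 : IntervalIntegrable (fun r => Real.exp (-lam * t) * ((t - r) ^ p * F r))
      volume 0 t := by
    refine IntervalIntegrable.const_mul ?_ _
    refine IntervalIntegrable.mono_fun' ((hrpow.const_mul (max M 0))) ?_ ?_
    · exact (((measurable_const.sub measurable_id).pow_const p).mul
        hFcont.measurable).aestronglyMeasurable
    · filter_upwards [ae_restrict_mem measurableSet_uIoc] with r hr
      rw [Set.uIoc_of_le ht0] at hr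
      have hr' : r ∈ Set.Icc (0:ℝ) t := ⟨hr.1.le, hr.2⟩
      have hv0 : (0:ℝ) ≤ t - r := by linarith [hr.2]
      have hrp : (0:ℝ) ≤ (t - r) ^ p := Real.rpow_nonneg hv0 p
      rw [Real.norm_eq_abs, abs_of_nonneg (mul_nonneg hrp (hF0 r hr.2))]
      calc (t - r) ^ p * F r ≤ (t - r) ^ p * (max M 0 * (t - r)) :=
            mul_le_mul_of_nonneg_left (hFleM r hr') hrp
        _ = max M 0 * (t - r) ^ (p + 1) := by
            rw [← hvp (t - r) hv0]; ring
  have hI2 : IntervalIntegrable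
      (fun r => K / lam * ((1 - Real.exp (-(lam * (t - r)))) * (t - r) ^ p)) volume 0 t := by
    refine IntervalIntegrable.const_mul ?_ _
    refine IntervalIntegrable.mono_fun' ((hrpow.const_mul lam)) ?_ ?_
    · exact ((measurable_const.sub (((measurable_const.mul
        (measurable_const.sub measurable_id)).neg).exp)).mul
        ((measurable_const.sub measurable_id).pow_const p)).aestronglyMeasurable
    · filter_upwards [ae_restrict_mem measurableSet_uIoc] with r hr
      rw [Set.uIoc_of_le ht0] at hr
      have hv0 : (0:ℝ) ≤ t - r := by linarith [hr.2]
      have hrp : (0:ℝ) ≤ (t - r) ^ p := Real.rpow_nonneg hv0 p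
      have hx0 : (0:ℝ) ≤ lam * (t - r) := mul_nonneg hlam.le hv0
      have hexple : Real.exp (-(lam * (t - r))) ≤ 1 := by
        have := Real.exp_le_exp.2 (show -(lam * (t - r)) ≤ 0 by linarith)
        rwa [Real.exp_zero] at this
      rw [Real.norm_eq_abs, abs_of_nonneg (mul_nonneg (by linarith) hrp)]
      calc (1 - Real.exp (-(lam * (t - r)))) * (t - r) ^ p
          ≤ (lam * (t - r)) * (t - r) ^ p :=
            mul_le_mul_of_nonneg_right (homle (lam * (t - r))) hrp
        _ = lam * (t - r) ^ (p + 1) := by rw [← hvp (t - r) hv0]; ring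
  -- the substitution identities
  have hsub1 : (∫ r in (0:ℝ)..t, (1 - Real.exp (-(lam * (t - r)))) * (t - r) ^ p) =
      ∫ v in (0:ℝ)..t, (1 - Real.exp (-(lam * v))) * v ^ p := by
    have h := intervalIntegral.integral_comp_sub_left
      (fun v => (1 - Real.exp (-(lam * v))) * v ^ p) t (a := 0) (b := t)
    simpa using h
  have hcongr : ∀ v ∈ Set.uIcc (0:ℝ) t,
      (1 - Real.exp (-(lam * v))) * v ^ p = lam ^ (-p) * f (lam * v) := by
    intro v hv
    rw [Set.uIcc_of_le ht0] at hv
    have hv0 : (0:ℝ) ≤ v := hv.1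
    simp only [hf]
    rw [Real.mul_rpow hlam.le hv0]
    have : lam ^ (-p) * lam ^ p = 1 := by
      rw [← Real.rpow_add hlam]; simp
    calc (1 - Real.exp (-(lam * v))) * v ^ p
        = (lam ^ (-p) * lam ^ p) * ((1 - Real.exp (-(lam * v))) * v ^ p) := by
          rw [this, one_mul]
      _ = lam ^ (-p) * ((1 - Real.exp (-(lam * v))) * (lam ^ p * v ^ p)) := by ring
  have hsub2 : (∫ v in (0:ℝ)..t, lam ^ (-p) * f (lam * v)) =
      lam ^ (-p) * (lam⁻¹ * ∫ s in (0:ℝ)..(lam * t), f s) := by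
    rw [intervalIntegral.integral_const_mul,
      intervalIntegral.integral_comp_mul_left f hlam.ne']
    simp [smul_eq_mul]
  have htail : (∫ s in (0:ℝ)..(lam * t), f s) ≤ C := by
    have hlt0 : (0:ℝ) ≤ lam * t := mul_nonneg hlam.le ht0
    rw [intervalIntegral.integral_of_le hlt0]
    refine setIntegral_mono_set hInt ?_ ?_
    · filter_upwards [ae_restrict_mem measurableSet_Ioi] with s hs
      exact hfnonneg s (le_of_lt hs)
    · exact HasSubset.Subset.eventuallyLE Set.Ioc_subset_Ioi_self
  have hC0 : 0 ≤ C := by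
    rw [hC]
    refine setIntegral_nonneg measurableSet_Ioi fun s hs => hfnonneg s (le_of_lt hs)
  have hexp : lam ^ (-p) * (lam⁻¹ * lam⁻¹) = lam ^ (-β / 2) := by
    rw [← Real.rpow_neg_one lam, ← Real.rpow_add hlam, ← Real.rpow_add hlam]
    congr 1
    rw [hp]; ring
  -- final chain
  calc Real.exp (-lam * t) * ∫ r in (0:ℝ)..t, (t - r) ^ p * F r
      = ∫ r in (0:ℝ)..t, Real.exp (-lam * t) * ((t - r) ^ p * F r) := by
        rw [intervalIntegral.integral_const_mul]
    _ ≤ ∫ r in (0:ℝ)..t, K / lam * ((1 - Real.exp (-(lam * (t - r)))) * (t - r) ^ p) :=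
        intervalIntegral.integral_mono_on ht0 hI1 hI2 key
    _ = K / lam * ∫ r in (0:ℝ)..t, (1 - Real.exp (-(lam * (t - r)))) * (t - r) ^ p := by
        rw [intervalIntegral.integral_const_mul]
    _ = K / lam * ∫ v in (0:ℝ)..t, lam ^ (-p) * f (lam * v) := by
        rw [hsub1, intervalIntegral.integral_congr hcongr]
    _ = K / lam * (lam ^ (-p) * (lam⁻¹ * ∫ s in (0:ℝ)..(lam * t), f s)) := by rw [hsub2]
    _ ≤ K / lam * (lam ^ (-p) * (lam⁻¹ * C)) := by
        have h1 : (0:ℝ) ≤ K / lam := div_nonneg hK0 hlam.le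
        have h2 : (0:ℝ) ≤ lam ^ (-p) := Real.rpow_nonneg hlam.le _
        have h3 : (0:ℝ) ≤ lam⁻¹ := inv_nonneg.2 hlam.le
        exact mul_le_mul_of_nonneg_left (mul_le_mul_of_nonneg_left
          (mul_le_mul_of_nonneg_left htail h3) h2) h1
    _ = C * lam ^ (-β / 2) * K := by
        rw [← hexp, div_eq_mul_inv]; ring
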